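/- For every real ε ∈ (0, 1) and every natural number m ≥ 1, there exists a natural number k (depending only on ε and m) such that for every n ≥ 1 there is a fixed family of samples S : Fin n → (Fin k → Fin n) with the following property: for every labelling z : Fin n → Fin m and every label b, the number of indices i ∈ Fin n for which |(#{j ∈ Fin k : z(S i j) = b})/k − (#{x ∈ Fin n : z(x) = b})/n| ≥ ε is less than ε · n. (Existence of a fixed, deterministic sampling choice of constant sample size k that is simultaneously accurate, up to additive error ε, for all but an ε-fraction of processors, against every possible configuration; this is the combinatorial heart of the derandomisation of Probabilistic ε-RPK.) -/

import Mathlib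

/-!
Probabilistic method. For a fixed labelling and label, the sample error of a uniformly random
`k`-tuple is at least `ε` with probability at most `δ = 1/(4kε²)`, by Chebyshev's inequality
(the variance of an empirical frequency is at most `1/(4k)`). The rows of a uniformly random
`S` are independent, so at least `r = ⌈εn⌉` bad rows occur with probability at most
`C(n, r) δʳ ≤ 2ⁿ δʳ`. A union bound over the `mⁿ · m` pairs (labelling, label) leaves
`(2(m + 1)²)ⁿ δʳ`. As `n ≤ L r` for an integer `L ≥ 1/ε`, this is at most
`((2(m + 1)²)ᴸ δ)ʳ`, which is below `1` as soon as `4kε² > (2(m + 1)²)ᴸ`, independently of `n`.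
-/

open Finset

theorem card_filter_le_abs_mul_sq_le_sum_sq {ι : Type*} (s : Finset ι) (f : ι → ℝ) {c : ℝ}
    (hc : 0 ≤ c) :
    #{x ∈ s | c ≤ |f x|} * c ^ 2 ≤ ∑ x ∈ s, f x ^ 2 := by
  calc #{x ∈ s | c ≤ |f x|} * c ^ 2 = ∑ x ∈ s with c ≤ |f x|, c ^ 2 := by
        rw [sum_const, nsmul_eq_mul]
    _ ≤ ∑ x ∈ s with c ≤ |f x|, f x ^ 2 :=
        sum_le_sum fun x hx => by simpa using pow_le_pow_left₀ hc (mem_filter.1 hx).2 2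
    _ ≤ ∑ x ∈ s, f x ^ 2 :=
        sum_le_sum_of_subset_of_nonneg (filter_subset _ _) fun _ _ _ => sq_nonneg _

theorem card_le_card_filter_mem_mul_pow_le {ι β : Type*} [Fintype ι] [DecidableEq ι]
    [Fintype β] [DecidableEq β] (B : Finset β) (r : ℕ) :
    #{S : ι → β | r ≤ #{i | S i ∈ B}} * Fintype.card β ^ r
      ≤ (Fintype.card ι).choose r * #B ^ r * Fintype.card β ^ Fintype.card ι := by
  let box : Finset ι → Finset (ι → β) := fun T =>
    Fintype.piFinset fun i => if i ∈ T then B else univ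
  have hcover : ({S : ι → β | r ≤ #{i | S i ∈ B}} : Finset (ι → β))
      ⊆ (powersetCard r univ).biUnion box := by
    intro S hS
    obtain ⟨T, hT, rfl⟩ := exists_subset_card_eq (mem_filter.1 hS).2
    refine mem_biUnion.2 ⟨T, mem_powersetCard.2 ⟨subset_univ _, rfl⟩, ?_⟩
    refine Fintype.mem_piFinset.2 fun i => ?_
    split_ifs with hi
    · exact (mem_filter.1 (hT hi)).2
    · exact mem_univ _
  have hbox : ∀ T : Finset ι,
      #(box T) * Fintype.card β ^ #T = #B ^ #T * Fintype.card β ^ Fintype.card ι := by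
    intro T
    rw [Fintype.card_piFinset, ← card_compl_add_card T, pow_add]
    simp only [apply_ite card, card_univ, prod_ite, prod_const]
    rw [filter_mem_eq_inter, univ_inter, filter_not, filter_mem_eq_inter, univ_inter,
      ← compl_eq_univ_sdiff]
    ring
  calc #{S : ι → β | r ≤ #{i | S i ∈ B}} * Fintype.card β ^ r
      ≤ (∑ T ∈ powersetCard r univ, #(box T)) * Fintype.card β ^ r := by
        gcongr; exact (card_le_card hcover).trans card_biUnion_le
    _ = ∑ T ∈ powersetCard r (univ : Finset ι),
          #B ^ r * Fintype.card β ^ Fintype.card ι := by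
        rw [sum_mul]
        refine sum_congr rfl fun T hT => ?_
        rw [← (mem_powersetCard.1 hT).2, hbox]
    _ = _ := by rw [sum_const, card_powersetCard, card_univ, smul_eq_mul, ← mul_assoc]

section

variable {α : Type*} [Fintype α]

theorem card_mul_sum_sq_sum_eq_of_sum_eq_zero {h : α → ℝ} (h0 : ∑ a, h a = 0) (k : ℕ) :
    Fintype.card α * ∑ t : Fin k → α, (∑ j, h (t j)) ^ 2
      = k * Fintype.card α ^ k * ∑ a, h a ^ 2 := by
  induction k with
  | zero => simp
  | succ k ih =>
    rw [← (Fin.consEquiv fun _ => α).sum_comp, Fintype.sum_prod_type]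
    have step : ∀ a, ∑ t' : Fin k → α, (∑ j, h (Fin.consEquiv (fun _ => α) (a, t') j)) ^ 2
        = Fintype.card α ^ k * h a ^ 2 + 2 * h a * ∑ t' : Fin k → α, ∑ j, h (t' j)
          + ∑ t' : Fin k → α, (∑ j, h (t' j)) ^ 2 := by
      intro a
      simp only [Fin.consEquiv_apply, Fin.sum_univ_succ, Fin.cons_zero, Fin.cons_succ]
      simp only [add_sq, sum_add_distrib, ← mul_sum, sum_const, card_univ, Fintype.card_fun,
        Fintype.card_fin, nsmul_eq_mul]
      push_cast; ring
    simp only [step, sum_add_distrib, ← sum_mul, ← mul_sum, h0, sum_const, card_univ,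
      nsmul_eq_mul]
    push_cast
    linear_combination (Fintype.card α : ℝ) * ih

theorem sum_indicator_sub_mean_sq_le [Nonempty α] (P : α → Prop) [DecidablePred P] :
    ∑ a, ((if P a then 1 else 0) - (#{a | P a} : ℝ) / Fintype.card α) ^ 2
      ≤ (Fintype.card α : ℝ) / 4 := by
  have hsplit : ∀ a, ((if P a then 1 else 0) - (#{a | P a} : ℝ) / Fintype.card α) ^ 2
      = (if P a then (1:ℝ) else 0) * (1 - 2 * (#{a | P a} / Fintype.card α))
        + ((#{a | P a} : ℝ) / Fintype.card α) ^ 2 := by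
    intro a; split_ifs <;> ring
  simp only [hsplit, sum_add_distrib, ← sum_mul, sum_boole, sum_const, card_univ, nsmul_eq_mul]
  have hn : (0 : ℝ) < Fintype.card α := by exact_mod_cast Fintype.card_pos
  rw [← sub_nonneg]
  have : (Fintype.card α : ℝ) / 4
      - ((#{a | P a} : ℝ) * (1 - 2 * (#{a | P a} / Fintype.card α))
        + Fintype.card α * ((#{a | P a} : ℝ) / Fintype.card α) ^ 2)
      = (Fintype.card α - 2 * #{a | P a}) ^ 2 / (4 * Fintype.card α) := by
    field_simp; ring
  rw [this]; positivity

noncomputable def sampleError (P : α → Prop) [DecidablePred P] {k : ℕ} (t : Fin k → α) :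
    ℝ :=
  |(#{j | P (t j)} : ℝ) / k - (#{a | P a} : ℝ) / Fintype.card α|

theorem card_le_sampleError_le [Nonempty α] (P : α → Prop) [DecidablePred P] {k : ℕ}
    (hk : 0 < k) {ε : ℝ} (hε : 0 < ε) :
    (#{t : Fin k → α | ε ≤ sampleError P t} : ℝ)
      ≤ Fintype.card α ^ k / (4 * k * ε ^ 2) := by
  set h : α → ℝ := fun a => (if P a then 1 else 0) - (#{a | P a} : ℝ) / Fintype.card α
  have hn : (0 : ℝ) < Fintype.card α := by exact_mod_cast Fintype.card_pos
  have hk : (0 : ℝ) < k := by exact_mod_cast hk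
  have h0 : ∑ a, h a = 0 := by
    simp only [h, sum_sub_distrib, sum_boole, sum_const, card_univ, nsmul_eq_mul]
    field_simp; ring
  have hsum : ∀ t : Fin k → α,
      ∑ j, h (t j) = k * ((#{j | P (t j)} : ℝ) / k - #{a | P a} / Fintype.card α) := by
    intro t
    simp only [h, sum_sub_distrib, sum_boole, sum_const, card_univ, nsmul_eq_mul,
      Fintype.card_fin]
    field_simp
  have hbad : #{t : Fin k → α | ε ≤ sampleError P t}
      = #{t : Fin k → α | k * ε ≤ |∑ j, h (t j)|} := by
    refine congrArg card (filter_congr fun t _ => ?_)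
    rw [hsum, abs_mul, abs_of_pos hk, sampleError, mul_le_mul_iff_right₀ hk]
  have hmarkov := card_filter_le_abs_mul_sq_le_sum_sq univ (fun t : Fin k → α => ∑ j, h (t j))
    (by positivity : 0 ≤ (k : ℝ) * ε)
  have hvar := card_mul_sum_sq_sum_eq_of_sum_eq_zero h0 k
  have hsq := sum_indicator_sub_mean_sq_le P
  rw [hbad, le_div_iff₀ (by positivity)]
  set X : ℝ := (#{t : Fin k → α | k * ε ≤ |∑ j, h (t j)|} : ℝ)
  have : Fintype.card α * (X * (4 * k * ε ^ 2) * k)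
      ≤ Fintype.card α * (Fintype.card α ^ k * k) := by
    calc _ = 4 * (Fintype.card α * (X * (k * ε) ^ 2)) := by ring
      _ ≤ 4 * (Fintype.card α * ∑ t : Fin k → α, (∑ j, h (t j)) ^ 2) := by gcongr
      _ = 4 * (k * Fintype.card α ^ k * ∑ a, h a ^ 2) := by rw [hvar]
      _ ≤ 4 * (k * Fintype.card α ^ k * (Fintype.card α / 4)) := by gcongr
      _ = _ := by ring
  exact le_of_mul_le_mul_right (le_of_mul_le_mul_left this hn) hk

theorem card_le_card_filter_le_sampleError_le {ι : Type*} [Fintype ι] [DecidableEq ι]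
    [DecidableEq α] [Nonempty α] (P : α → Prop) [DecidablePred P] {k : ℕ} (hk : 0 < k)
    {ε : ℝ} (hε : 0 < ε) (r : ℕ) :
    (#{S : ι → Fin k → α | r ≤ #{i | ε ≤ sampleError P (S i)}} : ℝ)
      ≤ (Fintype.card ι).choose r * (1 / (4 * k * ε ^ 2)) ^ r
          * ((Fintype.card α : ℝ) ^ k) ^ Fintype.card ι := by
  set N : ℝ := (Fintype.card α : ℝ) ^ k
  have hN : 0 < N := by positivity
  have hcount :=
    card_le_card_filter_mem_mul_pow_le (ι := ι) {t : Fin k → α | ε ≤ sampleError P t} r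
  simp only [mem_filter, mem_univ, true_and, Fintype.card_fun, Fintype.card_fin] at hcount
  have hcount : (#{S : ι → Fin k → α | r ≤ #{i | ε ≤ sampleError P (S i)}} : ℝ) * N ^ r
      ≤ (Fintype.card ι).choose r * #{t : Fin k → α | ε ≤ sampleError P t} ^ r
          * N ^ Fintype.card ι := by
    simp only [N]; exact_mod_cast hcount
  have hB : (#{t : Fin k → α | ε ≤ sampleError P t} : ℝ) ≤ 1 / (4 * k * ε ^ 2) * N := by
    rw [one_div_mul_eq_div]; exact card_le_sampleError_le P hk hε
  refine le_of_mul_le_mul_right (hcount.trans ?_) (pow_pos hN r)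
  calc _ ≤ (Fintype.card ι).choose r * (1 / (4 * k * ε ^ 2) * N) ^ r * N ^ Fintype.card ι := by
        gcongr
    _ = _ := by ring

end

theorem exists_forall_notMem_of_sum_card_lt {ι β : Type*} [Fintype ι] [Fintype β]
    (s : ι → Finset β) (h : ∑ i, #(s i) < Fintype.card β) : ∃ x, ∀ i, x ∉ s i := by
  classical
  by_contra! hcover
  have : univ ⊆ univ.biUnion s := fun x _ => mem_biUnion.2 <| by simpa using hcover x
  have := (card_le_card this).trans card_biUnion_le
  rw [card_univ] at this
  omega

theorem pow_mul_pow_lt_one {c δ : ℝ} (hc : 1 ≤ c) (hδ : 0 ≤ δ) {L n r : ℕ}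
    (hcδ : c ^ L * δ < 1) (hn : n ≤ L * r) (hr : r ≠ 0) : c ^ n * δ ^ r < 1 :=
  calc c ^ n * δ ^ r ≤ c ^ (L * r) * δ ^ r := by gcongr
    _ = (c ^ L * δ) ^ r := by rw [pow_mul, mul_pow]
    _ < 1 := pow_lt_one₀ (by positivity) hcδ hr

theorem pow_mul_mul_choose_le (m : ℕ) {n : ℕ} (hn : n ≠ 0) (r : ℕ) :
    (m : ℝ) ^ n * m * n.choose r ≤ (2 * (m + 1) ^ 2) ^ n := by
  have hm : (m : ℝ) ^ n * m ≤ ((m + 1) ^ 2) ^ n := calc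
    (m : ℝ) ^ n * m = m ^ (n + 1) := (pow_succ _ _).symm
    _ ≤ (m + 1) ^ (n + 1) := by gcongr; linarith
    _ ≤ (m + 1) ^ (2 * n) := pow_le_pow_right₀ (by linarith) (by omega)
    _ = ((m + 1) ^ 2) ^ n := pow_mul _ _ _
  have hchoose : (n.choose r : ℝ) ≤ 2 ^ n := by exact_mod_cast n.choose_le_two_pow r
  calc _ ≤ ((m + 1 : ℝ) ^ 2) ^ n * 2 ^ n := by gcongr
    _ = _ := by rw [← mul_pow, mul_comm]

theorem exists_sampling_choice_of_pow_lt {ε : ℝ} (hε : 0 < ε) {m n k L : ℕ} [NeZero n]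
    (hL : ε⁻¹ ≤ L) (hk : (2 * (m + 1) ^ 2 : ℝ) ^ L < 4 * k * ε ^ 2) :
    ∃ S : Fin n → Fin k → Fin n, ∀ (z : Fin n → Fin m) (b : Fin m),
      (#{i | ε ≤ sampleError (z · = b) (S i)} : ℝ) < ε * n := by
  have hden : (0 : ℝ) < 4 * k * ε ^ 2 := lt_of_le_of_lt (by positivity) hk
  have hk0 : 0 < k := Nat.pos_of_ne_zero (by rintro rfl; simp at hden)
  have hδ : (2 * (m + 1) ^ 2 : ℝ) ^ L * (1 / (4 * k * ε ^ 2)) < 1 := by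
    rwa [mul_one_div, div_lt_one hden]
  have hn : (0 : ℝ) < n := by exact_mod_cast NeZero.pos n
  set r := ⌈ε * n⌉₊
  have hr : r ≠ 0 := (Nat.ceil_pos.2 (mul_pos hε hn)).ne'
  have hnr : n ≤ L * r := by
    have : (n : ℝ) ≤ L * r := calc
      (n : ℝ) = ε⁻¹ * (ε * n) := by field_simp
      _ ≤ L * r := by gcongr; exact Nat.le_ceil _
    exact_mod_cast this
  set bad : (Fin n → Fin m) × Fin m → Finset (Fin n → Fin k → Fin n) := fun p =>
    {S | r ≤ #{i | ε ≤ sampleError (p.1 · = p.2) (S i)}}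
  have hunion : ∑ p, #(bad p) < Fintype.card (Fin n → Fin k → Fin n) := by
    rw [← Nat.cast_lt (α := ℝ)]
    push_cast
    calc ∑ p, (#(bad p) : ℝ)
        ≤ ∑ p : (Fin n → Fin m) × Fin m,
            n.choose r * (1 / (4 * k * ε ^ 2)) ^ r * ((n : ℝ) ^ k) ^ n := by
          gcongr with p
          simpa using
            card_le_card_filter_le_sampleError_le (ι := Fin n) (p.1 · = p.2) hk0 hε r
      _ = (m ^ n * m * n.choose r) * (1 / (4 * k * ε ^ 2)) ^ r * ((n : ℝ) ^ k) ^ n := by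
          simp [sum_const, Fintype.card_prod]; ring
      _ ≤ (2 * (m + 1) ^ 2) ^ n * (1 / (4 * k * ε ^ 2)) ^ r * ((n : ℝ) ^ k) ^ n := by
          gcongr; exact pow_mul_mul_choose_le m (NeZero.ne n) r
      _ < ((n : ℝ) ^ k) ^ n := by
          rw [mul_lt_iff_lt_one_left (by positivity)]
          have hm : (1 : ℝ) ≤ m + 1 := by simp
          exact pow_mul_pow_lt_one (by nlinarith) (by positivity) hδ hnr hr
      _ = _ := by simp
  obtain ⟨S, hS⟩ := exists_forall_notMem_of_sum_card_lt bad hunion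
  exact ⟨S, fun z b => by simpa [bad, r, Nat.ceil_le] using hS (z, b)⟩

theorem exists_good_sampling_choice_general
    {ε : ℝ} (hε0 : 0 < ε) (m : ℕ) :
    ∃ k : ℕ, ∀ n : ℕ, 1 ≤ n →
      ∃ S : Fin n → Fin k → Fin n,
        ∀ (z : Fin n → Fin m) (b : Fin m),
          ((Finset.univ.filter (fun i : Fin n =>
              ε ≤ |((Finset.univ.filter (fun j : Fin k => z (S i j) = b)).card : ℝ) / k
                    - ((Finset.univ.filter (fun x : Fin n => z x = b)).card : ℝ) / n|)).card : ℝ)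
            < ε * n := by
  obtain ⟨L, hL⟩ := exists_nat_ge ε⁻¹
  obtain ⟨k, hk⟩ := exists_nat_gt ((2 * (m + 1) ^ 2 : ℝ) ^ L / (4 * ε ^ 2))
  rw [div_lt_iff₀ (by positivity)] at hk
  refine ⟨k, fun n hn => ?_⟩
  have : NeZero n := ⟨by omega⟩
  obtain ⟨S, hS⟩ := exists_sampling_choice_of_pow_lt (n := n) hε0 hL (by linarith)
  exact ⟨S, fun z b => by simpa [sampleError] using hS z b⟩

/-- Derandomisation: for every `ε ∈ (0,1)` and number of labels `m ≥ 1`, there is a constant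
sample size `k` such that for every population size `n ≥ 1` there is a fixed family of
samples that, for every labelling and every label, is accurate to within `ε` for all but
fewer than `ε·n` of the processors. -/
theorem exists_good_sampling_choice
    {ε : ℝ} (hε0 : 0 < ε) (hε1 : ε < 1) (m : ℕ) (hm : 1 ≤ m) :
    ∃ k : ℕ, ∀ n : ℕ, 1 ≤ n →
      ∃ S : Fin n → Fin k → Fin n,
        ∀ (z : Fin n → Fin m) (b : Fin m),
          ((Finset.univ.filter (fun i : Fin n =>
              ε ≤ |((Finset.univ.filter (fun j : Fin k => z (S i j) = b)).card : ℝ) / k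
                    - ((Finset.univ.filter (fun x : Fin n => z x = b)).card : ℝ) / n|)).card : ℝ)
            < ε * n :=
  exists_good_sampling_choice_general hε0 m
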